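/- arXiv:2112.02722 — 7 statements merged into one kernel-verified Lean document; each statement's English description precedes it below -/
import Mathlib

section
/- Let p ≥ 2 and define the cone 𝓑_p of real symmetric p×p matrices B such that for every index i, the submatrix of B obtained by deleting row i and column i is positive semidefinite. Then B ∈ 𝓑_p if and only if for every matrix A in the convex cone 𝓐_p generated by matrices x xᵀ with x ∈ ℝ^p having at least one zero coordinate, Tr(A B) ≥ 0. -/
/-!
Since `Tr(x xᵀ B) = xᵀ B x`, testing against the generators of `𝓐_p` says that the quadratic
form of `B` is nonnegative on vectors with some zero coordinate. A vector vanishing at `i` is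
the extension by zero of a vector indexed by the complement of `i`, and on such vectors the
form of `B` is the form of the principal submatrix obtained by deleting row and column `i`.
-/

open Matrix

/-- Membership in the cone `𝓐_p`: the conical hull of matrices `x xᵀ` where
`x` has at least one zero coordinate. -/
def memA {p : ℕ} (A : Matrix (Fin p) (Fin p) ℝ) : Prop :=
  ∃ (r : ℕ) (c : Fin r → ℝ) (x : Fin r → Fin p → ℝ),
    (∀ i, 0 ≤ c i) ∧ (∀ i, ∃ j, x i j = 0) ∧
    A = ∑ i, c i • vecMulVec (x i) (x i)

lemma Matrix.trace_vecMulVec_mul {n R : Type*} [Fintype n] [CommSemiring R]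
    (x y : n → R) (B : Matrix n n R) :
    trace (vecMulVec x y * B) = y ⬝ᵥ B *ᵥ x := by
  rw [vecMulVec_mul, trace_vecMulVec, dotProduct_comm, dotProduct_mulVec]

section Subtype

variable {n R : Type*} [Fintype n] {P : n → Prop} [DecidablePred P]

lemma Fintype.sum_eq_sum_subtype_of_eq_zero [AddCommMonoid R] {f : n → R}
    (hf : ∀ j, ¬P j → f j = 0) : ∑ j, f j = ∑ j : Subtype P, f j := by
  rw [← Fintype.sum_subtype_add_sum_subtype P f,
    Fintype.sum_eq_zero (fun j : {j // ¬P j} ↦ f j) fun j ↦ hf j j.2, add_zero]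

lemma Matrix.dotProduct_mulVec_eq_submatrix [NonUnitalNonAssocSemiring R]
    (B : Matrix n n R) {x y : n → R} (hx : ∀ j, ¬P j → x j = 0) (hy : ∀ j, ¬P j → y j = 0) :
    x ⬝ᵥ B *ᵥ y =
      (fun j : Subtype P ↦ x j) ⬝ᵥ B.submatrix (↑) (↑) *ᵥ fun j : Subtype P ↦ y j := by
  simp only [dotProduct, mulVec, submatrix_apply]
  rw [Fintype.sum_eq_sum_subtype_of_eq_zero (P := P) fun j hj ↦ by simp [hx j hj]]
  refine Finset.sum_congr rfl fun j _ ↦ congrArg _ ?_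
  exact Fintype.sum_eq_sum_subtype_of_eq_zero (P := P) fun k hk ↦ by simp [hy k hk]

lemma Matrix.posSemidef_submatrix_subtype_iff [Ring R] [PartialOrder R] [StarRing R]
    {B : Matrix n n R} (hB : B.IsHermitian) :
    (B.submatrix ((↑) : Subtype P → n) (↑)).PosSemidef ↔
      ∀ x : n → R, (∀ j, ¬P j → x j = 0) → 0 ≤ star x ⬝ᵥ B *ᵥ x := by
  rw [posSemidef_iff_dotProduct_mulVec]
  refine and_iff_right_of_imp (fun _ ↦ hB.submatrix _) |>.trans ⟨fun h x hx ↦ ?_, fun h y ↦ ?_⟩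
  · rw [dotProduct_mulVec_eq_submatrix B (fun j hj ↦ by simp [hx j hj]) hx]
    exact h _
  · let x : n → R := fun j ↦ if hj : P j then y ⟨j, hj⟩ else 0
    have hx : ∀ j, ¬P j → x j = 0 := fun j hj ↦ dif_neg hj
    have hxy : (fun j : Subtype P ↦ x j) = y := funext fun j ↦ dif_pos j.2
    rw [← hxy]
    exact (h x hx).trans_eq (dotProduct_mulVec_eq_submatrix B (fun j hj ↦ by simp [hx j hj]) hx)

end Subtype

lemma forall_memA_imp_trace_mul_nonneg_iff {p : ℕ} (B : Matrix (Fin p) (Fin p) ℝ) :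
    (∀ A : Matrix (Fin p) (Fin p) ℝ, memA A → 0 ≤ trace (A * B)) ↔
      ∀ x : Fin p → ℝ, (∃ j, x j = 0) → 0 ≤ x ⬝ᵥ B *ᵥ x := by
  refine ⟨fun h x hx ↦ ?_, ?_⟩
  · simpa [trace_vecMulVec_mul] using
      h (vecMulVec x x) ⟨1, fun _ ↦ 1, fun _ ↦ x, fun _ ↦ zero_le_one, fun _ ↦ hx, by simp⟩
  · rintro h A ⟨r, c, x, hc, hx, rfl⟩
    simp only [Finset.sum_mul, trace_sum, smul_mul, trace_smul, smul_eq_mul,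
      trace_vecMulVec_mul]
    exact Finset.sum_nonneg fun k _ ↦ mul_nonneg (hc k) (h (x k) (hx k))

theorem memB_iff_trace_nonneg_general {p : ℕ}
    (B : Matrix (Fin p) (Fin p) ℝ) (hB : B.IsSymm) :
    (∀ i : Fin p,
      (B.submatrix (fun j : {j : Fin p // j ≠ i} => (j : Fin p))
        (fun j : {j : Fin p // j ≠ i} => (j : Fin p))).PosSemidef) ↔
    (∀ A : Matrix (Fin p) (Fin p) ℝ, memA A → 0 ≤ Matrix.trace (A * B)) := by
  rw [forall_memA_imp_trace_mul_nonneg_iff]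
  simp only [posSemidef_submatrix_subtype_iff (isHermitian_iff_isSymm.mpr hB), not_not,
    forall_eq, star_trivial]
  exact ⟨fun h x ⟨i, hi⟩ ↦ h i x hi, fun h i x hi ↦ h x ⟨i, hi⟩⟩

/-- `B ∈ 𝓑_p` (all principal submatrices of size `p-1` are PSD) iff
`Tr(A B) ≥ 0` for every `A` in the cone `𝓐_p`. -/
theorem memB_iff_trace_nonneg {p : ℕ} (hp : 2 ≤ p)
    (B : Matrix (Fin p) (Fin p) ℝ) (hB : B.IsSymm) :
    (∀ i : Fin p,
      (B.submatrix (fun j : {j : Fin p // j ≠ i} => (j : Fin p))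
        (fun j : {j : Fin p // j ≠ i} => (j : Fin p))).PosSemidef) ↔
    (∀ A : Matrix (Fin p) (Fin p) ℝ, memA A → 0 ≤ Matrix.trace (A * B)) :=
  memB_iff_trace_nonneg_general B hB
end

section
/- The cone 𝓐_p = conical hull of { x xᵀ : x ∈ ℝ^p, x_i = 0 for some index i } is a closed subset of the space of symmetric p×p real matrices. -/
/-!
A matrix lies in `𝓐_p` iff it is a sum `∑ j, X j` of positive semidefinite matrices with
`X j j j = 0`: a positive semidefinite matrix with a vanishing diagonal entry `j` is a sum of
rank-one terms `x xᵀ` with `x j = 0`. The summation map restricted to the closed set of such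
families is proper, because every entry of a positive semidefinite matrix is bounded by its trace
and `tr (X j) ≤ tr (∑ i, X i)`. The image of a proper map is closed.
-/

open Matrix

open Set

theorem IsClosed.image_of_isCompact_inter_preimage {X Y : Type*} [TopologicalSpace X]
    [TopologicalSpace Y] [T2Space Y] [CompactlyCoherentSpace Y] {f : X → Y} {S : Set X}
    (hf : Continuous f) (hS : ∀ ⦃K⦄, IsCompact K → IsCompact (S ∩ f ⁻¹' K)) :
    IsClosed (f '' S) := by
  have hproper : IsProperMap (S.domRestrict f) := by
    refine isProperMap_iff_isCompact_preimage.2 ⟨hf.comp continuous_subtype_val, fun K hK => ?_⟩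
    rw [Subtype.isCompact_iff]
    exact (Subtype.image_preimage_coe S (f ⁻¹' K)).symm ▸ hS hK
  simpa [range_domRestrict] using hproper.isClosed_range

namespace Matrix

instance locallyCompactSpace {m n R : Type*} [TopologicalSpace R] [LocallyCompactSpace R]
    [Finite m] [Finite n] : LocallyCompactSpace (Matrix m n R) :=
  inferInstanceAs (LocallyCompactSpace (m → n → R))

open scoped ComplexOrder in
theorem isClosed_setOf_posSemidef {n 𝕜 : Type*} [Fintype n] [RCLike 𝕜] :
    IsClosed {M : Matrix n n 𝕜 | M.PosSemidef} := by
  simp only [posSemidef_iff_dotProduct_mulVec, ofPred_and, ofPred_forall]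
  exact (isClosed_eq continuous_id.matrix_conjTranspose continuous_id).inter
    (isClosed_iInter fun x => isClosed_le continuous_const
      (continuous_const.dotProduct (continuous_id.matrix_mulVec continuous_const)))

variable {ι n : Type*} [Fintype ι] [Fintype n]

namespace PosSemidef

variable {M : Matrix n n ℝ}

theorem two_mul_abs_apply_le [DecidableEq n] (hM : M.PosSemidef) (a b : n) :
    2 * |M a b| ≤ M a a + M b b := by
  have hsymm : M b a = M a b := by simpa using congrFun (congrFun hM.1 a) b
  have hadd := hM.dotProduct_mulVec_nonneg (Pi.single a 1 + Pi.single b 1)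
  have hsub := hM.dotProduct_mulVec_nonneg (Pi.single a 1 - Pi.single b 1)
  simp only [star_trivial, mulVec_add, mulVec_sub, mulVec_single, add_dotProduct, sub_dotProduct,
    dotProduct_add, dotProduct_sub, single_dotProduct, Pi.smul_apply, op_smul_eq_mul, col_apply,
    one_mul] at hadd hsub
  rcases abs_cases (M a b) with ⟨h, _⟩ | ⟨h, _⟩ <;> linarith

theorem apply_le_trace (hM : M.PosSemidef) (a : n) : M a a ≤ M.trace :=
  Finset.single_le_sum (f := fun i => M i i) (fun _ _ => hM.diag_nonneg) (Finset.mem_univ a)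

theorem abs_apply_le_trace (hM : M.PosSemidef) (a b : n) : |M a b| ≤ M.trace := by
  classical
  linarith [hM.two_mul_abs_apply_le a b, hM.apply_le_trace a, hM.apply_le_trace b]

end PosSemidef

theorem trace_le_trace_sum {X : ι → Matrix n n ℝ} (hX : ∀ j, (X j).PosSemidef) (j : ι) :
    (X j).trace ≤ (∑ i, X i).trace := by
  rw [trace_sum]
  exact Finset.single_le_sum (fun i _ => (hX i).trace_nonneg) (Finset.mem_univ j)

theorem isCompact_inter_preimage_sum {S : Set (ι → Matrix n n ℝ)} (hS : IsClosed S)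
    (hSpsd : ∀ X ∈ S, ∀ j, (X j).PosSemidef) {K : Set (Matrix n n ℝ)} (hK : IsCompact K) :
    IsCompact (S ∩ (fun X => ∑ j, X j) ⁻¹' K) := by
  obtain ⟨C, hC⟩ := hK.bddAbove_image continuous_id.matrix_trace.continuousOn
  have hbox : IsCompact (univ.pi fun _ : ι => univ.pi fun _ : n => univ.pi fun _ : n =>
      Icc (-C) C : Set (ι → Matrix n n ℝ)) :=
    isCompact_univ_pi fun _ => isCompact_univ_pi fun _ => isCompact_univ_pi fun _ => isCompact_Icc
  refine hbox.of_isClosed_subset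
    (hS.inter (hK.isClosed.preimage (continuous_finsetSum _ fun j _ => continuous_apply j))) ?_
  rintro X ⟨hXS, hXK⟩ j - a - b -
  have hpsd := hSpsd X hXS
  exact abs_le.mp <| ((hpsd j).abs_apply_le_trace a b).trans <|
    (trace_le_trace_sum hpsd j).trans (hC ⟨_, hXK, rfl⟩)

def rankOneWithZeroEntry (n : Type*) : Set (Matrix n n ℝ) :=
  {M | ∃ x : n → ℝ, (∃ j, x j = 0) ∧ vecMulVec x x = M}

def psdZeroDiagFamilies (n : Type*) : Set (n → Matrix n n ℝ) :=
  {X | ∀ j, (X j).PosSemidef ∧ X j j j = 0}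

theorem isClosed_psdZeroDiagFamilies : IsClosed (psdZeroDiagFamilies n) := by
  simp only [psdZeroDiagFamilies, ofPred_forall, ofPred_and]
  exact isClosed_iInter fun j =>
    (isClosed_setOf_posSemidef.preimage (continuous_apply (A := fun _ : n => Matrix n n ℝ) j))
      |>.inter (isClosed_eq (by fun_prop) continuous_const)

theorem mem_hull_rankOneWithZeroEntry {M : Matrix n n ℝ} (hM : M.PosSemidef) {j : n}
    (hMj : M j j = 0) : M ∈ PointedCone.hull ℝ (rankOneWithZeroEntry n) := by
  obtain ⟨m, v, rfl⟩ := posSemidef_iff_eq_sum_vecMulVec.mp hM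
  simp only [star_trivial, sum_apply, vecMulVec_apply] at hMj
  have hv : ∀ i, v i j = 0 := fun i =>
    mul_self_eq_zero.mp ((Finset.sum_eq_zero_iff_of_nonneg fun i _ => mul_self_nonneg (v i j)).mp
      hMj i (Finset.mem_univ i))
  exact Submodule.sum_mem _ fun i _ => PointedCone.subset_hull ⟨v i, ⟨j, hv i⟩, rfl⟩

theorem mem_hull_rankOneWithZeroEntry_iff [DecidableEq n] {A : Matrix n n ℝ} :
    A ∈ PointedCone.hull ℝ (rankOneWithZeroEntry n) ↔
      ∃ X ∈ psdZeroDiagFamilies n, ∑ j, X j = A := by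
  constructor
  · intro hA
    induction hA using Submodule.span_induction with
    | mem M hM =>
      obtain ⟨x, ⟨j, hxj⟩, rfl⟩ := hM
      refine ⟨Pi.single j (vecMulVec x x), fun i => ?_, by simp⟩
      rcases eq_or_ne i j with rfl | hij
      · simpa [vecMulVec_apply, hxj] using posSemidef_vecMulVec_self_star x
      · simpa [hij] using PosSemidef.zero
    | zero => exact ⟨0, fun _ => ⟨PosSemidef.zero, rfl⟩, by simp⟩
    | add A B _ _ hA hB =>
      obtain ⟨X, hX, rfl⟩ := hA
      obtain ⟨Y, hY, rfl⟩ := hB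
      exact ⟨X + Y, fun j => ⟨(hX j).1.add (hY j).1, by simp [(hX j).2, (hY j).2]⟩,
        by simp [Finset.sum_add_distrib]⟩
    | smul c A _ hA =>
      obtain ⟨X, hX, rfl⟩ := hA
      exact ⟨(c : ℝ) • X, fun j => ⟨(hX j).1.smul c.2, by simp [(hX j).2]⟩,
        by simp [Finset.smul_sum]⟩
  · rintro ⟨X, hX, rfl⟩
    exact Submodule.sum_mem _ fun j _ => mem_hull_rankOneWithZeroEntry (hX j).1 (hX j).2

end Matrix

theorem memA_iff_mem_hull {p : ℕ} {A : Matrix (Fin p) (Fin p) ℝ} :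
    memA A ↔ A ∈ PointedCone.hull ℝ (rankOneWithZeroEntry (Fin p)) := by
  rw [Submodule.mem_span_set']
  constructor
  · rintro ⟨r, c, x, hc, hx, rfl⟩
    exact ⟨r, fun i => ⟨c i, hc i⟩, fun i => ⟨_, x i, hx i, rfl⟩, rfl⟩
  · rintro ⟨r, c, M, rfl⟩
    choose x hx hxM using fun i => (M i).2
    refine ⟨r, fun i => c i, x, fun i => (c i).2, hx, ?_⟩
    simp_rw [hxM]
    rfl

/-- The cone `𝓐_p` is a closed subset of the space of `p × p` real matrices. -/
theorem isClosed_coneA (p : ℕ) :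
    IsClosed {A : Matrix (Fin p) (Fin p) ℝ | memA A} := by
  have hrepr : {A : Matrix (Fin p) (Fin p) ℝ | memA A} =
      (fun X => ∑ j, X j) '' psdZeroDiagFamilies (Fin p) := by
    ext A
    rw [mem_ofPred_eq, memA_iff_mem_hull, mem_hull_rankOneWithZeroEntry_iff, mem_image]
  rw [hrepr]
  exact IsClosed.image_of_isCompact_inter_preimage
    (continuous_finsetSum _ fun j _ => continuous_apply j)
    fun _ hK =>
      isCompact_inter_preimage_sum isClosed_psdZeroDiagFamilies (fun _ hX j => (hX j).1) hK
end

section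
/- A symmetric matrix A belongs to the cone 𝓐_p (the conical hull of rank-one matrices x xᵀ with x having at least one zero coordinate) if and only if there exist matrices X_1, ..., X_p such that each X_i is positive semidefinite, the i-th row and column of X_i are all zeros, and A = ∑_{i=1}^p X_i. -/
open Matrix

theorem Matrix.eq_zero_of_sum_vecMulVec_self_apply_self_eq_zero {n ι : Type*} [Fintype ι]
    {v : ι → n → ℝ} {i : n} (h : (∑ m, vecMulVec (v m) (v m)) i i = 0) (m : ι) :
    v m i = 0 := by
  simp only [sum_apply, vecMulVec_apply] at h
  exact mul_self_eq_zero.mp <| (Finset.sum_eq_zero_iff_of_nonneg fun m _ =>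
    mul_self_nonneg (v m i)).mp h m (Finset.mem_univ m)

theorem Matrix.posSemidef_smul_vecMulVec_self {n : Type*} [Fintype n] {c : ℝ} (hc : 0 ≤ c)
    (x : n → ℝ) :
    (c • vecMulVec x x).PosSemidef := by
  simpa using (posSemidef_vecMulVec_self_star x).smul hc

lemma memA_zero {p : ℕ} : memA (0 : Matrix (Fin p) (Fin p) ℝ) :=
  ⟨0, ![], ![], finZeroElim, finZeroElim, by simp⟩

lemma memA_add {p : ℕ} {A B : Matrix (Fin p) (Fin p) ℝ} (hA : memA A) (hB : memA B) :
    memA (A + B) := by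
  obtain ⟨r, c, x, hc, hx, rfl⟩ := hA
  obtain ⟨s, d, y, hd, hy, rfl⟩ := hB
  refine ⟨r + s, Fin.append c d, Fin.append x y,
    Fin.addCases (by simpa using hc) (by simpa using hd),
    Fin.addCases (by simpa using hx) (by simpa using hy), by simp [Fin.sum_univ_add]⟩

lemma memA_sum {p : ℕ} {ι : Type*} (s : Finset ι) {A : ι → Matrix (Fin p) (Fin p) ℝ}
    (hA : ∀ i ∈ s, memA (A i)) : memA (∑ i ∈ s, A i) :=
  Finset.sum_induction _ _ (fun _ _ => memA_add) memA_zero hA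

lemma memA_of_posSemidef_of_apply_self_eq_zero {p : ℕ} {X : Matrix (Fin p) (Fin p) ℝ}
    (hX : X.PosSemidef) {i : Fin p} (hi : X i i = 0) : memA X := by
  obtain ⟨r, v, rfl⟩ := posSemidef_iff_eq_sum_vecMulVec.mp hX
  simp only [star_trivial] at hi ⊢
  exact ⟨r, 1, v, fun _ => zero_le_one,
    fun m => ⟨i, eq_zero_of_sum_vecMulVec_self_apply_self_eq_zero hi m⟩, by simp⟩

theorem memA_iff_exists_psd_decomposition_general {p : ℕ}
    (A : Matrix (Fin p) (Fin p) ℝ) :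
    memA A ↔
      ∃ X : Fin p → Matrix (Fin p) (Fin p) ℝ,
        (∀ i, (X i).PosSemidef) ∧
        (∀ i j, X i i j = 0 ∧ X i j i = 0) ∧
        A = ∑ i, X i := by
  constructor
  · rintro ⟨r, c, x, hc, hx, rfl⟩
    choose zeroIdx hzero using hx
    refine ⟨fun i => ∑ k with zeroIdx k = i, c k • vecMulVec (x k) (x k),
      fun i => posSemidef_sum _ fun k _ => posSemidef_smul_vecMulVec_self (hc k) (x k),
      fun i j => ?_, (Finset.sum_fiberwise _ _ _).symm⟩
    simp only [Matrix.sum_apply]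
    constructor <;> refine Finset.sum_eq_zero fun k hk => ?_ <;>
      simp [vecMulVec_apply, (Finset.mem_filter.mp hk).2 ▸ hzero k]
  · rintro ⟨X, hX, hrow, rfl⟩
    exact memA_sum _ fun i _ => memA_of_posSemidef_of_apply_self_eq_zero (hX i) (hrow i i).1

/-- A symmetric matrix `A` lies in `𝓐_p` iff `A = ∑ i, X i` where each `X i` is
PSD and has its `i`-th row and column identically zero. -/
theorem memA_iff_exists_psd_decomposition {p : ℕ}
    (A : Matrix (Fin p) (Fin p) ℝ) (hA : A.IsSymm) :
    memA A ↔
      ∃ X : Fin p → Matrix (Fin p) (Fin p) ℝ,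
        (∀ i, (X i).PosSemidef) ∧
        (∀ i j, X i i j = 0 ∧ X i j i = 0) ∧
        A = ∑ i, X i :=
  memA_iff_exists_psd_decomposition_general A
end

section
/- Suppose for each squarefree d (a subset of a set of primes P) real sieve weights λ_d are given. Then the implication 'for every set X with X ⊆ A_1 and X ∩ A_p = ∅ for all p ∈ P, one has |X| ≤ ∑_d λ_d |A_d|' holds for all choices of sets A_p ⊆ Z (with A_d = ∩_{p|d} A_p, A_1 = Z) if and only if λ_1 ≥ 1 and for every squarefree k, ∑_{d | k} λ_d ≥ 0. -/
lemma mem_finset_inf_iff {Z P : Type*} [Fintype Z] [DecidableEq Z] [DecidableEq P]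
    {z : Z} {d : Finset P} {A : P → Finset Z} :
    z ∈ d.inf A ↔ ∀ p ∈ d, z ∈ A p := by
  induction d using Finset.cons_induction with
  | empty => simp [Finset.top_eq_univ]
  | cons p s h ih => simp [Finset.inf_cons, Finset.mem_inter, ih]

/-- The sieve-weight implication `|X| ≤ ∑_d λ_d |A_d|` (for all choices of the
sets `A_p` and all sifted sets `X`) holds iff `λ_∅ ≥ 1` and
`∑_{d ⊆ k} λ_d ≥ 0` for every `k`. -/
theorem sieve_weights_valid_iff {Z P : Type*} [Fintype Z] [DecidableEq Z]
    [Nonempty Z] [Fintype P] [DecidableEq P] (lam : Finset P → ℝ) :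
    (∀ A : P → Finset Z, ∀ X : Finset Z,
        X ⊆ Finset.univ → (∀ p : P, X ∩ A p = ∅) →
        (X.card : ℝ) ≤ ∑ d : Finset P, lam d * ((d.inf A).card : ℝ)) ↔
    (1 ≤ lam ∅ ∧ ∀ k : Finset P, 0 ≤ ∑ d ∈ k.powerset, lam d) := by
  have hZpos : (0 : ℝ) < (Fintype.card Z : ℝ) := by
    exact_mod_cast Fintype.card_pos
  constructor
  · intro h
    constructor
    · have := h (fun _ => ∅) Finset.univ (subset_refl _) (fun p => by simp)
      have heq : ∀ d : Finset P,
          lam d * (((d.inf fun _ => (∅ : Finset Z)).card : ℝ))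
            = if d = ∅ then lam ∅ * (Fintype.card Z : ℝ) else 0 := by
        intro d
        rcases eq_or_ne d (∅ : Finset P) with rfl | hd
        · simp [Finset.top_eq_univ, Finset.card_univ]
        · obtain ⟨p, hp⟩ := Finset.nonempty_iff_ne_empty.2 hd
          have : d.inf (fun _ => (∅ : Finset Z)) = ∅ := by
            apply Finset.eq_empty_of_forall_notMem
            intro z hz
            exact absurd ((mem_finset_inf_iff.1 hz) p hp) (by simp)
          simp [this, hd]
      rw [Finset.sum_congr rfl (fun d _ => heq d)] at this
      rw [Finset.sum_ite_eq' Finset.univ (∅ : Finset P)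
        (fun _ => lam ∅ * (Fintype.card Z : ℝ))] at this
      simp [Finset.card_univ] at this
      nlinarith
    · intro k
      have := h (fun p => if p ∈ k then Finset.univ else ∅) ∅ (by simp) (fun p => by simp)
      have heq : ∀ d : Finset P,
          lam d * (((d.inf fun p => if p ∈ k then (Finset.univ : Finset Z) else ∅).card : ℝ))
            = if d ∈ k.powerset then lam d * (Fintype.card Z : ℝ) else 0 := by
        intro d
        by_cases hd : d ⊆ k
        · have : d.inf (fun p => if p ∈ k then (Finset.univ : Finset Z) else ∅)
              = Finset.univ := by
            apply Finset.eq_univ_of_forall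
            intro z
            rw [mem_finset_inf_iff]
            intro p hp
            simp [hd hp]
          simp [this, hd, Finset.card_univ]
        · obtain ⟨p, hp, hpk⟩ := Finset.not_subset.1 hd
          have : d.inf (fun p => if p ∈ k then (Finset.univ : Finset Z) else ∅) = ∅ := by
            apply Finset.eq_empty_of_forall_notMem
            intro z hz
            have := (mem_finset_inf_iff.1 hz) p hp
            simp [hpk] at this
          simp [this, hd]
      rw [Finset.sum_congr rfl (fun d _ => heq d)] at this
      rw [Finset.sum_ite_mem] at this
      simp only [Finset.univ_inter, ← Finset.sum_mul, Finset.card_empty, Nat.cast_zero] at this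
      nlinarith
  · rintro ⟨h1, hk⟩ A X _ hX
    -- k z = set of p with z ∈ A p
    set K : Z → Finset P := fun z => Finset.univ.filter (fun p => z ∈ A p) with hK
    have hswap : ∑ d : Finset P, lam d * ((d.inf A).card : ℝ)
        = ∑ z : Z, ∑ d ∈ (K z).powerset, lam d := by
      have : ∀ d : Finset P, lam d * ((d.inf A).card : ℝ)
          = ∑ z : Z, if d ∈ (K z).powerset then lam d else 0 := by
        intro d
        have hcard : ((d.inf A).card : ℝ) = ∑ z : Z, if d ∈ (K z).powerset then (1:ℝ) else 0 := by
          rw [Finset.card_eq_sum_ones (d.inf A)]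
          push_cast
          rw [← Finset.sum_filter]
          congr 1
          ext z
          simp [mem_finset_inf_iff, hK, Finset.subset_iff]
        rw [hcard, Finset.mul_sum]
        congr 1; ext z
        split <;> simp
      rw [Finset.sum_congr rfl (fun d _ => this d), Finset.sum_comm]
      congr 1; ext z
      rw [Finset.sum_ite_mem, Finset.univ_inter]
    rw [hswap]
    have hXK : ∀ z ∈ X, K z = ∅ := by
      intro z hz
      apply Finset.eq_empty_of_forall_notMem
      intro p hp
      simp only [hK, Finset.mem_filter] at hp
      have : z ∈ X ∩ A p := Finset.mem_inter.2 ⟨hz, hp.2⟩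
      rw [hX p] at this
      exact absurd this (Finset.notMem_empty z)
    calc (X.card : ℝ) = ∑ z ∈ X, (1:ℝ) := by simp
      _ ≤ ∑ z ∈ X, ∑ d ∈ (K z).powerset, lam d := by
          apply Finset.sum_le_sum
          intro z hz
          rw [hXK z hz]
          simpa using h1
      _ ≤ ∑ z : Z, ∑ d ∈ (K z).powerset, lam d := by
          apply Finset.sum_le_sum_of_subset_of_nonneg (Finset.subset_univ X)
          intro z _ _
          exact hk (K z)
end

section
/- Let P be a finite set and λ : Powerset(P) → ℝ with λ_∅ = 1 and θ(k) := ∑_{d ⊆ k} λ_d ≥ 0 for all k ⊆ P. If λ is supported on subsets of size at most 2m, then every subset k ⊆ P of size 2m+1 contains a nonempty subset d with θ(d) ≥ 2^{-2m}. -/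
/-!
Möbius inversion on the subset lattice turns `θ(k) = ∑_{d ⊆ k} λ_d` into
`∑_{d ⊆ k} (-1)^{|d|} θ(d) = (-1)^{|k|} λ_k`, which vanishes when `|k| = 2m + 1`. Hence θ has
the same total over the odd-size subsets of `k` as over the even-size ones, and the latter is at
least `θ(∅) = 1`. The `2^{2m}` odd-size subsets are nonempty, so one of them carries
`θ(d) ≥ 2^{-2m}`.
-/

open Finset

namespace Finset

variable {ι α R : Type*} [Ring R]

theorem sum_neg_one_pow_mul_eq_sub (s : Finset ι) (n : ι → ℕ) (f : ι → R) :
    ∑ i ∈ s, (-1) ^ n i * f i =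
      ∑ i ∈ s with Even (n i), f i - ∑ i ∈ s with Odd (n i), f i := by
  rw [← sum_filter_add_sum_filter_not s (fun i ↦ Even (n i)), sub_eq_add_neg,
    ← sum_neg_distrib]
  simp only [Nat.not_even_iff_odd]
  congr 1 <;> refine sum_congr rfl fun i hi ↦ ?_
  · rw [(mem_filter.mp hi).2.neg_one_pow, one_mul]
  · rw [(mem_filter.mp hi).2.neg_one_pow, neg_one_mul]

theorem card_powerset_filter_odd {s : Finset α} (hs : s.Nonempty) :
    #{t ∈ s.powerset | Odd #t} = 2 ^ (#s - 1) := by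
  have hbalance : (#{t ∈ s.powerset | Even #t} : ℤ) = #{t ∈ s.powerset | Odd #t} := by
    have := sum_neg_one_pow_mul_eq_sub s.powerset card (fun _ ↦ (1 : ℤ))
    simp only [mul_one, sum_const, nsmul_one, sum_powerset_neg_one_pow_card_of_nonempty hs] at this
    linarith
  have htotal := card_filter_add_card_filter_not (s := s.powerset) (fun t ↦ Odd #t)
  simp only [Nat.not_odd_iff_even, card_powerset] at htotal
  have h2 : 2 ^ #s = 2 * 2 ^ (#s - 1) := by
    rw [← pow_succ', Nat.sub_add_cancel hs.card_pos]
  omega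

theorem sum_Icc_neg_one_pow_card [DecidableEq α] {e k : Finset α} (h : e ⊆ k) :
    ∑ d ∈ Icc e k, (-1 : R) ^ #d = if e = k then (-1) ^ #k else 0 := by
  have hdisj : ∀ c ∈ (k \ e).powerset, Disjoint e c := fun c hc ↦
    disjoint_of_subset_right (mem_powerset.mp hc) disjoint_sdiff
  rw [Icc_eq_image_powerset h, sum_image]
  · rw [sum_congr rfl fun c hc ↦ by rw [card_union_of_disjoint (hdisj c hc), pow_add], ← mul_sum]
    have := congrArg (Int.cast : ℤ → R) (sum_powerset_neg_one_pow_card (x := k \ e))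
    push_cast at this
    rw [this]
    by_cases hke : e = k
    · simp [hke]
    · have hke' : ¬k ⊆ e := fun hk ↦ hke (h.antisymm hk)
      simp [hke, hke', sdiff_eq_empty_iff_subset]
  · intro c₁ hc₁ c₂ hc₂ hc
    rw [← union_sdiff_cancel_left (hdisj c₁ hc₁), ← union_sdiff_cancel_left (hdisj c₂ hc₂)]
    exact congrArg (· \ e) hc

theorem moebius_inversion_powerset [DecidableEq α] (f g : Finset α → R)
    (h : ∀ k, g k = ∑ d ∈ k.powerset, f d) (k : Finset α) :
    ∑ d ∈ k.powerset, (-1) ^ #d * g d = (-1) ^ #k * f k := by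
  calc ∑ d ∈ k.powerset, (-1) ^ #d * g d
      = ∑ d ∈ k.powerset, ∑ e ∈ d.powerset, (-1) ^ #d * f e := by simp_rw [h, mul_sum]
    _ = ∑ e ∈ k.powerset, ∑ d ∈ Icc e k, (-1) ^ #d * f e :=
        sum_comm' fun d e ↦ by simp only [mem_powerset, mem_Icc]; grind
    _ = ∑ e ∈ k.powerset, (if e = k then (-1) ^ #k else 0) * f e :=
        sum_congr rfl fun e he ↦ by rw [← sum_mul, sum_Icc_neg_one_pow_card (mem_powerset.mp he)]
    _ = (-1) ^ #k * f k := by simp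

end Finset

theorem exists_good_divisor_general {P : Type*} (m : ℕ)
    (lam : Finset P → ℝ) (θ : Finset P → ℝ)
    (hθ : ∀ k : Finset P, θ k = ∑ d ∈ k.powerset, lam d)
    (hlam1 : lam ∅ = 1)
    (hθ0 : ∀ k : Finset P, 0 ≤ θ k)
    (hsupp : ∀ d : Finset P, 2 * m < d.card → lam d = 0) :
    ∀ k : Finset P, k.card = 2 * m + 1 →
      ∃ d ⊆ k, d.Nonempty ∧ ((2 : ℝ) ^ (2 * m))⁻¹ ≤ θ d := by
  classical
  intro k hk
  set oddSubsets := {d ∈ k.powerset | Odd #d}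
  have hbalance : ∑ d ∈ k.powerset with Even #d, θ d = ∑ d ∈ oddSubsets, θ d := by
    have := moebius_inversion_powerset lam θ hθ k
    rwa [hsupp k (by omega), mul_zero, sum_neg_one_pow_mul_eq_sub, sub_eq_zero] at this
  have hθ_empty : θ ∅ = 1 := by simp [hθ, hlam1]
  have hone : 1 ≤ ∑ d ∈ oddSubsets, θ d := by
    rw [← hbalance, ← hθ_empty]
    exact single_le_sum (fun d _ ↦ hθ0 d) (by simp)
  have hcard : #oddSubsets = 2 ^ (2 * m) := by
    rw [card_powerset_filter_odd (card_pos.mp (by omega)), hk, Nat.add_sub_cancel]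
  obtain ⟨d, hd, hle⟩ := exists_le_of_sum_le (f := fun _ ↦ ((2 : ℝ) ^ (2 * m))⁻¹)
    (card_pos.mp (by rw [hcard]; positivity)) (by simpa [hcard] using hone)
  rw [mem_filter, mem_powerset] at hd
  exact ⟨d, hd.1, card_pos.mp hd.2.pos, hle⟩

/-- If `λ_∅ = 1`, all partial sums `θ(k) = ∑_{d ⊆ k} λ_d` are nonnegative, and
`λ` is supported on sets of size at most `2m`, then every `k` of size `2m+1`
contains a nonempty subset `d` with `θ(d) ≥ 2^{-2m}`. -/
theorem exists_good_divisor {P : Type*} [Fintype P] [DecidableEq P] (m : ℕ)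
    (lam : Finset P → ℝ) (θ : Finset P → ℝ)
    (hθ : ∀ k : Finset P, θ k = ∑ d ∈ k.powerset, lam d)
    (hlam1 : lam ∅ = 1)
    (hθ0 : ∀ k : Finset P, 0 ≤ θ k)
    (hsupp : ∀ d : Finset P, 2 * m < d.card → lam d = 0) :
    ∀ k : Finset P, k.card = 2 * m + 1 →
      ∃ d ⊆ k, d.Nonempty ∧ ((2 : ℝ) ^ (2 * m))⁻¹ ≤ θ d :=
  exists_good_divisor_general m lam θ hθ hlam1 hθ0 hsupp
end

section
/- Let Z = ∏_{p ∈ P} ℤ/n_p (a finite product of cyclic groups) and let B be the real Z×Z matrix B_{ij} = b_{(j-i,P)}, where (x,P) := { p ∈ P : x_p = 0 } and b : Powerset(P) → ℝ. Then the Fourier transform diagonalizes B: for each character χ = ∏_p χ_p of Z with support k_χ = { p : χ_p nontrivial }, the corresponding eigenvalue of B is ∑_{d ⊆ P} b_d · ∏_{p ∈ P \ d, p ∉ k_χ} (n_p - 1) · ∏_{p ∈ P \ d, p ∈ k_χ} (-1). In particular B is positive semidefinite if and only if these quantities are nonnegative for all k ⊆ P. -/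
/-!
A matrix of the form `B x y = f (y - x)` on a finite abelian group `Z` commutes with translations,
so every additive character `ψ` of `Z` is an eigenvector, with eigenvalue `∑ z, f z * ψ z`.
For `f z = b (z, P)` and the character `χ_a`, this sum splits along the zero set `d` of `z` into a
product over coordinates: a coordinate `p ∉ d` contributes `∑_{t ≠ 0} e(a_p t / n_p)`, which is
`n_p - 1` if `a_p = 0` and `-1` otherwise.
Since `χ_a x = χ_x a`, the characters `χ_a` also satisfy the completeness relation
`∑_a χ_a χ_aᴴ = |Z| • 1`, so `B = |Z|⁻¹ ∑_a λ_a χ_a χ_aᴴ`: nonnegative eigenvalues make `B`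
positive semidefinite, and conversely a positive semidefinite `B` has nonnegative eigenvalues.
Both statements are proved for the complexification of `B`, which is positive semidefinite
exactly when `B` is.
-/

open Matrix

variable {P : Type*} [Fintype P] [DecidableEq P]

/-- The structured matrix `B_{ij} = b_{(j-i,P)}` on `Z = ∏_p ℤ/n_p`, where
`(x,P)` is the set of coordinates where `x` vanishes. -/
noncomputable def sieveMatrix (n : P → ℕ) [∀ p, NeZero (n p)] (b : Finset P → ℝ) :
    Matrix ((p : P) → ZMod (n p)) ((p : P) → ZMod (n p)) ℝ :=
  fun i j => b (Finset.univ.filter fun p => j p - i p = 0)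

/-- The eigenvalue of `sieveMatrix n b` attached to a character with support `k`. -/
noncomputable def sieveEigenvalue (n : P → ℕ) (b : Finset P → ℝ) (k : Finset P) : ℝ :=
  ∑ d : Finset P, b d *
    ((∏ p ∈ (Finset.univ \ d) \ k, ((n p : ℝ) - 1)) *
      ∏ _p ∈ (Finset.univ \ d) ∩ k, (-1 : ℝ))

open Finset
open scoped ComplexOrder

namespace Matrix

theorem of_sub_mulVec_addChar {G R : Type*} [AddCommGroup G] [Fintype G] [CommSemiring R]
    (f : G → R) (ψ : AddChar G R) :
    (of fun x y => f (y - x)) *ᵥ ⇑ψ = (∑ z, f z * ψ z) • ⇑ψ := by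
  ext x
  calc ∑ y, f (y - x) * ψ y = ∑ z, f z * ψ (x + z) :=
        (Fintype.sum_equiv (Equiv.addLeft x) _ _ fun z => by simp).symm
    _ = ψ x * ∑ z, f z * ψ z := by simp_rw [AddChar.map_add_eq_mul, mul_sum, mul_left_comm]
    _ = _ := mul_comm _ _

variable {ι 𝕜 : Type*} [Fintype ι] [RCLike 𝕜]

theorem PosSemidef.nonneg_of_mulVec_eq_smul {A : Matrix ι ι 𝕜} (hA : A.PosSemidef) {v : ι → 𝕜}
    (hv : v ≠ 0) {μ : ℝ} (h : A *ᵥ v = (μ : 𝕜) • v) : 0 ≤ μ := by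
  have hquad := hA.re_dotProduct_nonneg v
  have hpos : 0 < RCLike.re (star v ⬝ᵥ v) :=
    (RCLike.pos_iff.mp (dotProduct_star_self_pos_iff.mpr hv)).1
  rw [h, dotProduct_smul, smul_eq_mul, RCLike.re_ofReal_mul] at hquad
  exact nonneg_of_mul_nonneg_left hquad hpos

theorem posSemidef_of_sum_vecMulVec_eq_smul_one [DecidableEq ι] {κ : Type*} [Fintype κ]
    {A : Matrix ι ι 𝕜} (v : κ → ι → 𝕜) {c : ℝ} (hc : 0 < c)
    (hv : ∑ i, vecMulVec (v i) (star (v i)) = c • (1 : Matrix ι ι 𝕜)) (μ : κ → ℝ)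
    (hA : ∀ i, A *ᵥ v i = (μ i : 𝕜) • v i) (hμ : ∀ i, 0 ≤ μ i) : A.PosSemidef := by
  have hdecomp : A = ∑ i, (μ i / c) • vecMulVec (v i) (star (v i)) :=
    calc A = c⁻¹ • (A * ∑ i, vecMulVec (v i) (star (v i))) := by
          rw [hv, mul_smul_comm, mul_one, smul_smul, inv_mul_cancel₀ hc.ne', one_smul]
      _ = _ := by
          simp_rw [mul_sum, smul_sum, mul_vecMulVec, hA, ← RCLike.real_smul_eq_coe_smul (K := 𝕜),
            smul_vecMulVec, smul_smul, div_eq_inv_mul]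
  rw [hdecomp]
  exact posSemidef_sum _ fun i _ =>
    (posSemidef_vecMulVec_self_star (v i)).smul (div_nonneg (hμ i) hc.le)

theorem PosSemidef.map_ofReal {A : Matrix ι ι ℝ} (hA : A.PosSemidef) :
    (A.map ((↑) : ℝ → 𝕜)).PosSemidef := by
  obtain ⟨m, v, rfl⟩ := posSemidef_iff_eq_sum_vecMulVec.mp hA
  have hmap : (∑ i, vecMulVec (v i) (star (v i))).map ((↑) : ℝ → 𝕜)
      = ∑ i, vecMulVec (fun x => (v i x : 𝕜)) (star fun x => (v i x : 𝕜)) := by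
    ext x y
    simp [vecMulVec_apply, Matrix.sum_apply]
  rw [hmap]
  exact posSemidef_sum _ fun i _ => posSemidef_vecMulVec_self_star _

theorem posSemidef_map_ofReal_iff {A : Matrix ι ι ℝ} :
    (A.map ((↑) : ℝ → 𝕜)).PosSemidef ↔ A.PosSemidef := by
  refine ⟨fun h => PosSemidef.of_dotProduct_mulVec_nonneg ?_ fun x => ?_, PosSemidef.map_ofReal⟩
  · ext i j
    simpa using congr_fun₂ h.isHermitian i j
  · have hcast : star (fun i => (x i : 𝕜)) ⬝ᵥ (A.map (↑) *ᵥ fun i => (x i : 𝕜))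
        = ((star x ⬝ᵥ (A *ᵥ x) : ℝ) : 𝕜) := by
      simp [dotProduct, mulVec]
    simpa [hcast] using h.dotProduct_mulVec_nonneg fun i => (x i : 𝕜)

end Matrix

theorem ZMod.sum_stdAddChar_mul_compl_zero {N : ℕ} [NeZero N] (a : ZMod N) :
    ∑ t ∈ ({0}ᶜ : Finset (ZMod N)), stdAddChar (a * t) = (if a = 0 then (N : ℂ) else 0) - 1 := by
  have hsplit := sum_compl_add_sum {0} fun t => stdAddChar (a * t)
  rw [sum_singleton, mul_zero, AddChar.map_zero_eq_one] at hsplit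
  simp_rw [eq_sub_iff_add_eq, hsplit, mul_comm a,
    AddChar.sum_mulShift a (isPrimitive_stdAddChar N), ZMod.card, Nat.cast_ite, Nat.cast_zero]

section SieveCharacter

variable {ι : Type*} [Fintype ι] (n : ι → ℕ) [∀ i, NeZero (n i)]

noncomputable def sieveChar (a : (i : ι) → ZMod (n i)) : AddChar ((i : ι) → ZMod (n i)) ℂ where
  toFun x := ∏ i, ZMod.stdAddChar (a i * x i)
  map_zero_eq_one' := by simp
  map_add_eq_mul' x y := by simp [mul_add, AddChar.map_add_eq_mul, prod_mul_distrib]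

theorem sieveChar_apply (a x : (i : ι) → ZMod (n i)) :
    sieveChar n a x = ∏ i, Complex.exp (2 * Real.pi * Complex.I *
      (((a i).val : ℂ) * ((x i).val : ℂ) / ((n i : ℕ) : ℂ))) := by
  refine prod_congr rfl fun i _ => ?_
  have hcast : a i * x i = (((a i).val * (x i).val : ℤ) : ZMod (n i)) := by simp
  rw [hcast, ZMod.stdAddChar_coe]
  push_cast
  ring_nf

theorem sieveChar_comm (a x : (i : ι) → ZMod (n i)) : sieveChar n a x = sieveChar n x a := by
  simp only [sieveChar, AddChar.coe_mk, mul_comm]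

theorem sieveChar_eq_zero_iff [DecidableEq ι] {a : (i : ι) → ZMod (n i)} :
    sieveChar n a = 0 ↔ a = 0 := by
  refine ⟨fun h => funext fun i => ?_, fun h => ?_⟩
  · have hsingle : sieveChar n a (Pi.single i 1) = ZMod.stdAddChar (a i) := by
      rw [sieveChar, AddChar.coe_mk, prod_eq_single i]
      · simp
      · intro j _ hj
        simp [hj]
      · simp
    have hone : ZMod.stdAddChar (a i) = ZMod.stdAddChar (0 : ZMod (n i)) := by
      rw [← hsingle, h, AddChar.zero_apply, AddChar.map_zero_eq_one]
    exact ZMod.injective_stdAddChar hone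
  · ext x
    simp [sieveChar, h]

theorem sum_vecMulVec_sieveChar [DecidableEq ι] :
    ∑ a, vecMulVec (sieveChar n a) (star ⇑(sieveChar n a))
      = (Fintype.card ((i : ι) → ZMod (n i)) : ℝ) • (1 : Matrix _ _ ℂ) := by
  ext x y
  have hterm : ∀ a, sieveChar n a x * star (sieveChar n a y) = sieveChar n (x - y) a := by
    intro a
    rw [Complex.star_def, ← AddChar.map_neg_eq_conj, ← AddChar.map_add_eq_mul, ← sub_eq_add_neg,
      sieveChar_comm]
  simp only [Matrix.sum_apply, vecMulVec_apply, Pi.star_apply, hterm, AddChar.sum_eq_ite,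
    sieveChar_eq_zero_iff, sub_eq_zero, Matrix.smul_apply, Matrix.one_apply]
  split_ifs <;> simp

theorem filter_zeroSet_eq_piFinset [DecidableEq ι] (d : Finset ι) :
    univ.filter (fun z : (i : ι) → ZMod (n i) => univ.filter (fun i => z i = 0) = d)
      = Fintype.piFinset fun i => if i ∈ d then {0} else {0}ᶜ := by
  ext z
  simp only [mem_filter, mem_univ, true_and, Fintype.mem_piFinset, Finset.ext_iff]
  refine forall_congr' fun i => ?_
  split_ifs with hi <;> simp [hi]

theorem sum_sieveChar_fiber [DecidableEq ι] (a : (i : ι) → ZMod (n i)) (d : Finset ι) :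
    ∑ z with univ.filter (fun i => z i = 0) = d, sieveChar n a z
      = (∏ i ∈ (univ \ d) \ univ.filter (fun i => a i ≠ 0), ((n i : ℂ) - 1)) *
          ∏ _i ∈ (univ \ d) ∩ univ.filter (fun i => a i ≠ 0), (-1 : ℂ) := by
  set k := univ.filter fun i => a i ≠ 0
  have hfactor : ∀ i, ∑ t ∈ (if i ∈ d then {0} else {0}ᶜ), ZMod.stdAddChar (a i * t)
      = if i ∈ d then 1 else if i ∈ k then -1 else (n i : ℂ) - 1 := by
    intro i
    by_cases hd : i ∈ d
    · simp [hd]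
    · rw [if_neg hd, if_neg hd, ZMod.sum_stdAddChar_mul_compl_zero]
      by_cases ha : a i = 0 <;> simp [k, ha]
  simp only [filter_zeroSet_eq_piFinset, sieveChar, AddChar.coe_mk]
  rw [← prod_univ_sum (fun i => if i ∈ d then {0} else {0}ᶜ) fun i t => ZMod.stdAddChar (a i * t),
    prod_congr rfl fun i _ => hfactor i, prod_ite, prod_const_one, one_mul,
    filter_notMem_eq_sdiff, prod_ite, filter_mem_eq_inter, filter_notMem_eq_sdiff, mul_comm]

theorem sum_mul_sieveChar [DecidableEq ι] (b : Finset ι → ℝ) (a : (i : ι) → ZMod (n i)) :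
    ∑ z, (b (univ.filter fun i => z i = 0) : ℂ) * sieveChar n a z
      = sieveEigenvalue n b (univ.filter fun i => a i ≠ 0) := by
  rw [← sum_fiberwise univ fun z => univ.filter fun i => z i = 0, sieveEigenvalue]
  push_cast
  refine sum_congr rfl fun d _ => ?_
  rw [← sum_sieveChar_fiber, mul_sum]
  exact sum_congr rfl fun z hz => by rw [(mem_filter.mp hz).2]

theorem mulVec_sieveChar [DecidableEq ι] (b : Finset ι → ℝ) (a : (i : ι) → ZMod (n i)) :
    (sieveMatrix n b).map Complex.ofReal *ᵥ ⇑(sieveChar n a)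
      = (sieveEigenvalue n b (univ.filter fun i => a i ≠ 0) : ℂ) • ⇑(sieveChar n a) := by
  have hconv : (sieveMatrix n b).map Complex.ofReal
      = of fun x y => (b (univ.filter fun i => (y - x) i = 0) : ℂ) := by
    ext x y
    rfl
  rw [hconv, of_sub_mulVec_addChar fun z : (i : ι) → ZMod (n i) =>
    (b (univ.filter fun i => z i = 0) : ℂ), sum_mul_sieveChar]

end SieveCharacter

/-- The Fourier transform diagonalizes `B_{ij} = b_{(j-i,P)}`: each character
`x ↦ ∏_p e^{2πi a_p x_p / n_p}` is an eigenvector with eigenvalue depending only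
on the support `k = {p : a_p ≠ 0}`, namely `∑_d b_d ∏_{p ∉ d, p ∉ k}(n_p - 1) ∏_{p ∉ d, p ∈ k}(-1)`;
in particular `B` is PSD iff all these quantities are nonnegative. -/
theorem sieveMatrix_diagonalized (n : P → ℕ) [∀ p, NeZero (n p)]
    (hn : ∀ p, 2 ≤ n p) (b : Finset P → ℝ) :
    (∀ a : (p : P) → ZMod (n p),
      ((sieveMatrix n b).map (Complex.ofReal)).mulVec
          (fun x : (p : P) → ZMod (n p) =>
            ∏ p : P, Complex.exp (2 * Real.pi * Complex.I *
              (((a p).val : ℂ) * ((x p).val : ℂ) / ((n p : ℕ) : ℂ)))) =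
        ((sieveEigenvalue n b (Finset.univ.filter fun p => a p ≠ 0) : ℝ) : ℂ) •
          (fun x : (p : P) → ZMod (n p) =>
            ∏ p : P, Complex.exp (2 * Real.pi * Complex.I *
              (((a p).val : ℂ) * ((x p).val : ℂ) / ((n p : ℕ) : ℂ)))))
    ∧ ((sieveMatrix n b).PosSemidef ↔ ∀ k : Finset P, 0 ≤ sieveEigenvalue n b k) := by
  refine ⟨fun a => ?_, ?_⟩
  · simp only [← sieveChar_apply]
    exact mulVec_sieveChar n b a
  rw [← posSemidef_map_ofReal_iff (𝕜 := ℂ)]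
  constructor
  · intro h k
    let a : (p : P) → ZMod (n p) := fun p => if p ∈ k then 1 else 0
    have hsupp : univ.filter (fun p => a p ≠ 0) = k := by
      ext p
      have : Fact (1 < n p) := ⟨hn p⟩
      by_cases hp : p ∈ k <;> simp [a, hp]
    exact h.nonneg_of_mulVec_eq_smul (AddChar.coe_ne_zero _) (hsupp ▸ mulVec_sieveChar n b a)
  · intro hk
    exact posSemidef_of_sum_vecMulVec_eq_smul_one _ (by positivity) (sum_vecMulVec_sieveChar n) _
      (mulVec_sieveChar n b) fun a => hk _
end

section
/- Let Z = ∏_{p ∈ P} ℤ/n_p. The matrices T_k := ⊗_{p ∈ k}(n_p I_{n_p} - J_{n_p}) ⊗_{q ∉ k} J_{n_q}, for k ranging over subsets of P, form a positive basis for the cone of matrices B of the form B_{ij} = b_{(j-i,P)} that are positive semidefinite: such a B is PSD if and only if B = ∑_k w_k T_k for some weights w_k ≥ 0. -/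
/-!
Write `L = n I - J` and `J` for the all-ones matrix, so that `T_k` is the Kronecker product of `L`
over `k` and `J` off `k`. From `L J = J L = 0`, `L² = n L` and `J² = n J`, the `T_k` are symmetric
with `T_k T_s = 0` for `k ≠ s` and `T_k² = N T_k`, `N = ∏ n_p`; hence `T_k = N⁻¹ T_kᵀ T_k` is PSD.
Conversely `B = ∑_d b_d ⊗_p (I or J - I)`, and both `I` and `J - I` lie in the span of `L` and
`J`, so expanding the Kronecker products gives `B = ∑ w_k T_k`. Then `T_k B T_k = w_k N² T_k`, and
a diagonal entry of this PSD matrix is `w_k N² ∏_{p ∈ k} (n_p - 1)`, forcing `w_k ≥ 0`.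
-/

open Matrix

variable {P : Type*} [Fintype P] [DecidableEq P]

/-- The basis matrix `T_k = ⊗_{p ∈ k}(n_p I - J) ⊗_{q ∉ k} J`, written entrywise
on the product index set `∏_p ℤ/n_p`. -/
noncomputable def basisMatrix (n : P → ℕ) [∀ p, NeZero (n p)] (k : Finset P) :
    Matrix ((p : P) → ZMod (n p)) ((p : P) → ZMod (n p)) ℝ :=
  fun i j => ∏ p ∈ k, ((if i p = j p then (n p : ℝ) else 0) - 1)

namespace Matrix

variable {ι R : Type*} [Fintype ι] [CommSemiring R] {X Y Z : ι → Type*}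

def piKronecker (A : ∀ i, Matrix (X i) (Y i) R) : Matrix (∀ i, X i) (∀ i, Y i) R :=
  of fun x y => ∏ i, A i (x i) (y i)

@[simp]
lemma piKronecker_apply (A : ∀ i, Matrix (X i) (Y i) R) (x : ∀ i, X i) (y : ∀ i, Y i) :
    piKronecker A x y = ∏ i, A i (x i) (y i) :=
  rfl

lemma piKronecker_mul_piKronecker [DecidableEq ι] [∀ i, Fintype (Y i)]
    (A : ∀ i, Matrix (X i) (Y i) R) (B : ∀ i, Matrix (Y i) (Z i) R) :
    piKronecker A * piKronecker B = piKronecker fun i => A i * B i := by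
  ext x z
  simp only [mul_apply, piKronecker_apply, ← Finset.prod_mul_distrib, Fintype.prod_sum]

lemma piKronecker_transpose (A : ∀ i, Matrix (X i) (Y i) R) :
    (piKronecker A)ᵀ = piKronecker fun i => (A i)ᵀ :=
  rfl

lemma piKronecker_eq_zero {A : ∀ i, Matrix (X i) (Y i) R} (i : ι) (hi : A i = 0) :
    piKronecker A = 0 := by
  ext x y
  exact Finset.prod_eq_zero (Finset.mem_univ i) (by simp [hi])

lemma piKronecker_smul (c : ι → R) (A : ∀ i, Matrix (X i) (Y i) R) :
    piKronecker (fun i => c i • A i) = (∏ i, c i) • piKronecker A := by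
  ext x y
  simp [Finset.prod_mul_distrib]

lemma piKronecker_add [DecidableEq ι] (A B : ∀ i, Matrix (X i) (Y i) R) :
    piKronecker (fun i => A i + B i) =
      ∑ s : Finset ι, piKronecker fun i => if i ∈ s then A i else B i := by
  ext x y
  simp only [piKronecker_apply, add_apply, Fintype.prod_add, sum_apply]
  refine Finset.sum_congr rfl fun s _ => ?_
  rw [← Finset.prod_mul_prod_compl s]
  congr 1 <;> refine Finset.prod_congr rfl fun i hi => ?_
  · rw [if_pos hi]
  · rw [if_neg (Finset.mem_compl.1 hi)]

lemma piKronecker_mem_span_pair [DecidableEq ι] {A C D : ∀ i, Matrix (X i) (Y i) R}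
    (hA : ∀ i, A i ∈ Submodule.span R {C i, D i}) :
    piKronecker A ∈ Submodule.span R
      (Set.range fun s : Finset ι => piKronecker fun i => if i ∈ s then C i else D i) := by
  choose c d hcd using fun i => Submodule.mem_span_pair.1 (hA i)
  have hA' : A = fun i => c i • C i + d i • D i := funext fun i => (hcd i).symm
  rw [hA', piKronecker_add]
  refine Submodule.sum_mem _ fun s _ => ?_
  have hs : (piKronecker fun i => if i ∈ s then c i • C i else d i • D i) =
      (∏ i, if i ∈ s then c i else d i) • piKronecker fun i => if i ∈ s then C i else D i := by
    rw [← piKronecker_smul]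
    congr! 2 with i
    split_ifs <;> rfl
  rw [hs]
  exact Submodule.smul_mem _ _ (Submodule.subset_span ⟨s, rfl⟩)

def allOnes (X R : Type*) [One R] : Matrix X X R :=
  of fun _ _ => 1

def completeLaplacian (X R : Type*) [Fintype X] [DecidableEq X] [Ring R] : Matrix X X R :=
  (Fintype.card X : R) • 1 - allOnes X R

lemma allOnes_transpose {X R : Type*} [One R] : (allOnes X R)ᵀ = allOnes X R :=
  rfl

section CompleteGraph

variable {X R : Type*} [Fintype X] [CommRing R]

lemma allOnes_mul_allOnes : allOnes X R * allOnes X R = (Fintype.card X : R) • allOnes X R := by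
  ext
  simp [allOnes, mul_apply]

variable [DecidableEq X]

lemma completeLaplacian_mul_allOnes : completeLaplacian X R * allOnes X R = 0 := by
  rw [completeLaplacian, sub_mul, smul_mul, one_mul, allOnes_mul_allOnes, sub_self]

lemma allOnes_mul_completeLaplacian : allOnes X R * completeLaplacian X R = 0 := by
  rw [completeLaplacian, mul_sub, Matrix.mul_smul, mul_one, allOnes_mul_allOnes, sub_self]

lemma completeLaplacian_mul_self :
    completeLaplacian X R * completeLaplacian X R =
      (Fintype.card X : R) • completeLaplacian X R := by
  conv_lhs => arg 2; rw [completeLaplacian]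
  rw [mul_sub, Matrix.mul_smul, mul_one, completeLaplacian_mul_allOnes, sub_zero]

lemma completeLaplacian_transpose : (completeLaplacian X R)ᵀ = completeLaplacian X R := by
  simp [completeLaplacian, allOnes_transpose]

end CompleteGraph

section Field

variable {X K : Type*} [Fintype X] [DecidableEq X] [Field K]

lemma one_mem_span_completeLaplacian_allOnes (hX : (Fintype.card X : K) ≠ 0) :
    (1 : Matrix X X K) ∈ Submodule.span K {completeLaplacian X K, allOnes X K} := by
  refine Submodule.mem_span_pair.2 ⟨(Fintype.card X : K)⁻¹, (Fintype.card X : K)⁻¹, ?_⟩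
  rw [← smul_add, completeLaplacian, sub_add_cancel, smul_smul, inv_mul_cancel₀ hX, one_smul]

lemma allOnes_sub_one_mem_span_completeLaplacian_allOnes (hX : (Fintype.card X : K) ≠ 0) :
    allOnes X K - 1 ∈ Submodule.span K {completeLaplacian X K, allOnes X K} :=
  Submodule.sub_mem _ (Submodule.subset_span (by simp))
    (one_mem_span_completeLaplacian_allOnes hX)

end Field

end Matrix

lemma prod_natCast_pos {ι : Type*} [Fintype ι] (n : ι → ℕ) [∀ i, NeZero (n i)] :
    0 < ∏ i, (n i : ℝ) :=
  Finset.prod_pos fun i _ => by exact_mod_cast Nat.pos_of_ne_zero (NeZero.ne (n i))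

section SieveMatrix

variable (n : P → ℕ) [∀ p, NeZero (n p)]

lemma basisMatrix_eq_piKronecker (k : Finset P) :
    basisMatrix n k =
      piKronecker fun p => if p ∈ k then completeLaplacian _ ℝ else allOnes _ ℝ := by
  ext i j
  have hfactor (p : P) :
      (if p ∈ k then completeLaplacian _ ℝ else allOnes _ ℝ) (i p) (j p) =
        if p ∈ k then (if i p = j p then (n p : ℝ) else 0) - 1 else 1 := by
    split_ifs <;> simp_all [completeLaplacian, allOnes, one_apply]
  simp only [basisMatrix, piKronecker_apply, hfactor, Finset.prod_ite_mem, Finset.univ_inter]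

lemma sieveMatrix_eq_sum_piKronecker (b : Finset P → ℝ) :
    sieveMatrix n b = ∑ d, b d • piKronecker fun p => if p ∈ d then 1 else allOnes _ ℝ - 1 := by
  ext i j
  set S := Finset.univ.filter fun p => j p - i p = 0
  have hfactor (d : Finset P) (p : P) :
      (if p ∈ d then (1 : Matrix _ _ ℝ) else allOnes _ ℝ - 1) (i p) (j p) =
        if (p ∈ d ↔ p ∈ S) then 1 else 0 := by
    have hS : p ∈ S ↔ i p = j p := by simp [S, sub_eq_zero, eq_comm]
    by_cases hd : p ∈ d <;> by_cases hij : i p = j p <;> simp [hd, hS, hij, allOnes, one_apply]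
  change b S = _
  simp only [Matrix.sum_apply, Matrix.smul_apply, piKronecker_apply, hfactor, Finset.prod_boole,
    Finset.mem_univ, true_implies, ← Finset.ext_iff, smul_eq_mul, mul_boole, Finset.sum_ite_eq',
    if_true]

lemma sieveMatrix_mem_span_basisMatrix (b : Finset P → ℝ) :
    sieveMatrix n b ∈ Submodule.span ℝ (Set.range (basisMatrix n)) := by
  have hcard (p : P) : (Fintype.card (ZMod (n p)) : ℝ) ≠ 0 := by
    simp [ZMod.card, NeZero.ne (n p)]
  have hT : basisMatrix n = fun k =>
      piKronecker fun p => if p ∈ k then completeLaplacian _ ℝ else allOnes _ ℝ :=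
    funext (basisMatrix_eq_piKronecker n)
  rw [sieveMatrix_eq_sum_piKronecker, hT]
  refine Submodule.sum_mem _ fun d _ =>
    Submodule.smul_mem _ _ (piKronecker_mem_span_pair fun p => ?_)
  split_ifs
  · exact one_mem_span_completeLaplacian_allOnes (hcard p)
  · exact allOnes_sub_one_mem_span_completeLaplacian_allOnes (hcard p)

lemma basisMatrix_mul_self (k : Finset P) :
    basisMatrix n k * basisMatrix n k = (∏ p, (n p : ℝ)) • basisMatrix n k := by
  simp only [basisMatrix_eq_piKronecker, piKronecker_mul_piKronecker, ← piKronecker_smul]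
  congr! 2 with p
  split_ifs
  · rw [completeLaplacian_mul_self, ZMod.card]
  · rw [allOnes_mul_allOnes, ZMod.card]

lemma basisMatrix_mul_of_ne {k s : Finset P} (h : k ≠ s) :
    basisMatrix n k * basisMatrix n s = 0 := by
  obtain ⟨p, hp⟩ : ∃ p, ¬(p ∈ k ↔ p ∈ s) := by
    by_contra! hks
    exact h (Finset.ext hks)
  simp only [basisMatrix_eq_piKronecker, piKronecker_mul_piKronecker]
  refine piKronecker_eq_zero p ?_
  by_cases hk : p ∈ k
  · simp [hk, show p ∉ s by tauto, completeLaplacian_mul_allOnes]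
  · simp [hk, show p ∈ s by tauto, allOnes_mul_completeLaplacian]

lemma basisMatrix_mul_sum_smul (k : Finset P) (w : Finset P → ℝ) :
    basisMatrix n k * ∑ s, w s • basisMatrix n s = (w k * ∏ p, (n p : ℝ)) • basisMatrix n k := by
  rw [Finset.mul_sum, Finset.sum_eq_single k]
  · rw [Matrix.mul_smul, basisMatrix_mul_self, smul_smul]
  · intro s _ hs
    rw [Matrix.mul_smul, basisMatrix_mul_of_ne n (Ne.symm hs), smul_zero]
  · simp

lemma basisMatrix_mul_sum_smul_mul (k : Finset P) (w : Finset P → ℝ) :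
    basisMatrix n k * (∑ s, w s • basisMatrix n s) * basisMatrix n k =
      (w k * (∏ p, (n p : ℝ)) ^ 2) • basisMatrix n k := by
  rw [basisMatrix_mul_sum_smul, Matrix.smul_mul, basisMatrix_mul_self, smul_smul, sq, mul_assoc]

lemma basisMatrix_transpose (k : Finset P) : (basisMatrix n k)ᵀ = basisMatrix n k := by
  rw [basisMatrix_eq_piKronecker, piKronecker_transpose]
  congr! 2 with p
  split_ifs
  · exact completeLaplacian_transpose
  · exact allOnes_transpose

lemma basisMatrix_posSemidef (k : Finset P) : (basisMatrix n k).PosSemidef := by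
  have hT : basisMatrix n k = (∏ p, (n p : ℝ))⁻¹ • ((basisMatrix n k)ᴴ * basisMatrix n k) := by
    rw [conjTranspose_eq_transpose_of_trivial, basisMatrix_transpose, basisMatrix_mul_self,
      smul_smul, inv_mul_cancel₀ (prod_natCast_pos n).ne', one_smul]
  rw [hT]
  exact (posSemidef_conjTranspose_mul_self _).smul (by positivity)

end SieveMatrix

/-- The matrices `T_k` form a positive basis for the cone of PSD matrices of the
form `B_{ij} = b_{(j-i,P)}`: such a `B` is PSD iff `B = ∑_k w_k T_k` with all
`w_k ≥ 0`. -/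
theorem sieveMatrix_posSemidef_iff_posComb (n : P → ℕ) [∀ p, NeZero (n p)]
    (hn : ∀ p, 2 ≤ n p) (b : Finset P → ℝ) :
    (sieveMatrix n b).PosSemidef ↔
      ∃ w : Finset P → ℝ, (∀ k, 0 ≤ w k) ∧
        sieveMatrix n b = ∑ k : Finset P, w k • basisMatrix n k := by
  constructor
  · intro hB
    obtain ⟨w, hw⟩ :=
      (Submodule.mem_span_range_iff_exists_fun ℝ).1 (sieveMatrix_mem_span_basisMatrix n b)
    refine ⟨w, fun k => ?_, hw.symm⟩
    have hdiag := (hB.conjTranspose_mul_mul_same (basisMatrix n k)).diag_nonneg (i := 0)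
    rw [conjTranspose_eq_transpose_of_trivial, basisMatrix_transpose, ← hw,
      basisMatrix_mul_sum_smul_mul, Matrix.smul_apply, smul_eq_mul, mul_assoc] at hdiag
    have hdiag_pos : 0 < basisMatrix n k 0 0 := Finset.prod_pos fun p _ => by
      have : (2 : ℝ) ≤ n p := by exact_mod_cast hn p
      rw [if_pos rfl]
      linarith
    exact nonneg_of_mul_nonneg_left hdiag (mul_pos (pow_pos (prod_natCast_pos n) 2) hdiag_pos)
  · rintro ⟨w, hw, hB⟩
    rw [hB]
    exact posSemidef_sum _ fun k _ => (basisMatrix_posSemidef n k).smul (hw k)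
end
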